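/- arXiv:2403.10359 — 5 statements merged into one kernel-verified Lean document; each statement's English description precedes it below -/
import Mathlib

section
/- Generalized Ward identity and inequality. Let X be an N×N Hermitian matrix and let z ∈ ℂ^N satisfy Im z_j > 0 for all j. Then the matrix X − diag(z) is invertible; setting G := (X − diag z)^{−1} and Im G := (G − G*)/(2i), one has the identity Im G = G·diag(Im z)·G*, and consequently the Loewner (positive semidefinite order) inequality G·G* ≤ (min_j Im z_j)^{−1}·Im G. -/
open Matrix
open scoped ComplexOrder

/-- **Generalized Ward identity and inequality.**
Let `X` be a Hermitian matrix and `z` a vector of spectral parameters with positive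
imaginary parts.  Then `X - diag z` is invertible, the generalized resolvent
`G := (X - diag z)⁻¹` satisfies `Im G = G · diag(Im z) · G*`, and the Loewner inequality
`G·G* ≤ (min_j Im z_j)⁻¹ · Im G` holds. -/
theorem generalized_ward_identity
    {n : Type*} [Fintype n] [DecidableEq n] [Nonempty n]
    (X : Matrix n n ℂ) (hX : X.IsHermitian)
    (z : n → ℂ) (hz : ∀ j, 0 < (z j).im) :
    IsUnit (X - Matrix.diagonal z) ∧
    ((X - Matrix.diagonal z)⁻¹ - ((X - Matrix.diagonal z)⁻¹)ᴴ)
        = (2 * Complex.I) •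
          ((X - Matrix.diagonal z)⁻¹ *
            Matrix.diagonal (fun j => ((z j).im : ℂ)) *
            ((X - Matrix.diagonal z)⁻¹)ᴴ) ∧
    (((⨅ j, (z j).im) : ℝ)⁻¹ •
        ((2 * Complex.I)⁻¹ •
          ((X - Matrix.diagonal z)⁻¹ - ((X - Matrix.diagonal z)⁻¹)ᴴ))
      - (X - Matrix.diagonal z)⁻¹ * ((X - Matrix.diagonal z)⁻¹)ᴴ).PosSemidef := by
  set A : Matrix n n ℂ := X - Matrix.diagonal z with hA
  -- invertibility
  have hdet : A.det ≠ 0 := by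
    intro h
    obtain ⟨v, hv, hAv⟩ := Matrix.exists_mulVec_eq_zero_iff.mpr h
    have h0 : star v ⬝ᵥ (A *ᵥ v) = 0 := by rw [hAv, dotProduct_zero]
    have hXherm : (star v ⬝ᵥ (X *ᵥ v)).im = 0 := by
      have hc : (starRingEnd ℂ) (star v ⬝ᵥ (X *ᵥ v)) = star v ⬝ᵥ (X *ᵥ v) := by
        calc (starRingEnd ℂ) (star v ⬝ᵥ (X *ᵥ v))
            = star (star v ⬝ᵥ (X *ᵥ v)) := rfl
          _ = star (X *ᵥ v) ⬝ᵥ v := by rw [Matrix.star_dotProduct, star_star]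
          _ = (star v ᵥ* Xᴴ) ⬝ᵥ v := by rw [Matrix.star_mulVec]
          _ = star v ⬝ᵥ (Xᴴ *ᵥ v) := by rw [Matrix.dotProduct_mulVec]
          _ = star v ⬝ᵥ (X *ᵥ v) := by rw [hX.eq]
      exact Complex.conj_eq_iff_im.mp hc
    have hdiag : (star v ⬝ᵥ (Matrix.diagonal z *ᵥ v)).im
        = ∑ j, (z j).im * Complex.normSq (v j) := by
      simp only [dotProduct, Pi.star_apply, Matrix.mulVec_diagonal, Complex.im_sum]
      refine Finset.sum_congr rfl fun j _ => ?_
      have : star (v j) * (z j * v j) = z j * ((Complex.normSq (v j) : ℝ) : ℂ) := by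
        rw [Complex.normSq_eq_conj_mul_self]
        simp only [Complex.star_def]
        ring
      rw [this]
      simp [Complex.mul_im]
    have him : (0:ℝ) = -∑ j, (z j).im * Complex.normSq (v j) := by
      have := congrArg Complex.im h0
      rw [hA, Matrix.sub_mulVec, dotProduct_sub] at this
      simp only [Complex.sub_im, Complex.zero_im, hXherm, hdiag] at this
      linarith
    have hsum : ∑ j, (z j).im * Complex.normSq (v j) = 0 := by linarith
    obtain ⟨j, hj⟩ := Function.ne_iff.mp hv
    have hterm : ∀ i ∈ Finset.univ, (0:ℝ) ≤ (z i).im * Complex.normSq (v i) :=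
      fun i _ => mul_nonneg (hz i).le (Complex.normSq_nonneg _)
    have := (Finset.sum_eq_zero_iff_of_nonneg hterm).mp hsum j (Finset.mem_univ j)
    have hpos : 0 < (z j).im * Complex.normSq (v j) :=
      mul_pos (hz j) (by simpa [Complex.normSq_pos] using hj)
    linarith
  have hdetu : IsUnit A.det := isUnit_iff_ne_zero.mpr hdet
  have hunit : IsUnit A := (Matrix.isUnit_iff_isUnit_det A).mpr hdetu
  have hdetHu : IsUnit Aᴴ.det := by
    rw [Matrix.det_conjTranspose]; exact isUnit_iff_ne_zero.mpr (by simpa using hdet)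
  -- the Ward identity
  have hAH : Aᴴ - A = (2 * Complex.I) • Matrix.diagonal (fun j => ((z j).im : ℂ)) := by
    have : Aᴴ = X - Matrix.diagonal (star z) := by
      rw [hA, Matrix.conjTranspose_sub, hX.eq, Matrix.diagonal_conjTranspose]
    rw [this, hA]
    ext i j
    by_cases hij : i = j
    · subst hij
      simp [Matrix.diagonal_apply_eq, Complex.ext_iff, Complex.conj_re, Complex.conj_im,
        Complex.mul_im, Complex.mul_re]
      ring_nf
    · simp [Matrix.diagonal_apply_ne _ hij]
  have hGinvH : A⁻¹ᴴ = Aᴴ⁻¹ := Matrix.conjTranspose_nonsing_inv A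
  have hward : A⁻¹ - A⁻¹ᴴ
      = (2 * Complex.I) • (A⁻¹ * Matrix.diagonal (fun j => ((z j).im : ℂ)) * A⁻¹ᴴ) := by
    have key : A⁻¹ - A⁻¹ᴴ = A⁻¹ * (Aᴴ - A) * A⁻¹ᴴ := by
      rw [Matrix.mul_sub, Matrix.sub_mul, hGinvH]
      rw [Matrix.mul_nonsing_inv_cancel_right _ _ hdetHu,
        Matrix.nonsing_inv_mul _ hdetu, Matrix.one_mul]
    rw [key, hAH, Matrix.mul_smul, Matrix.smul_mul]
  refine ⟨hunit, hward, ?_⟩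
  -- the inequality
  set c : ℝ := ⨅ j, (z j).im with hc
  obtain ⟨j₀, hj₀⟩ := Finite.exists_min fun j => (z j).im
  have hcle : ∀ j, c ≤ (z j).im := fun j =>
    ciInf_le (Set.Finite.bddBelow (Set.finite_range _)) j
  have hcge : (z j₀).im ≤ c := le_ciInf hj₀
  have hcpos : 0 < c := lt_of_lt_of_le (hz j₀) hcge
  have hsimp : ((2 * Complex.I)⁻¹ • (A⁻¹ - A⁻¹ᴴ))
      = A⁻¹ * Matrix.diagonal (fun j => ((z j).im : ℂ)) * A⁻¹ᴴ := by
    rw [hward, smul_smul, inv_mul_cancel₀ (by simp [Complex.I_ne_zero] : (2 * Complex.I) ≠ 0),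
      one_smul]
  rw [hsimp]
  have hrw : c⁻¹ • (A⁻¹ * Matrix.diagonal (fun j => ((z j).im : ℂ)) * A⁻¹ᴴ) - A⁻¹ * A⁻¹ᴴ
      = A⁻¹ * Matrix.diagonal (fun j => ((c⁻¹ * (z j).im - 1 : ℝ) : ℂ)) * A⁻¹ᴴ := by
    have h1 : c⁻¹ • (A⁻¹ * Matrix.diagonal (fun j => ((z j).im : ℂ)) * A⁻¹ᴴ)
        = A⁻¹ * (c⁻¹ • Matrix.diagonal (fun j => ((z j).im : ℂ))) * A⁻¹ᴴ := by
      simp [smul_mul_assoc, mul_smul_comm]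
    have h2 : A⁻¹ * A⁻¹ᴴ = A⁻¹ * (1 : Matrix n n ℂ) * A⁻¹ᴴ := by rw [Matrix.mul_one]
    rw [h1, h2, ← Matrix.sub_mul, ← Matrix.mul_sub]
    congr 1
    congr 1
    ext i k
    by_cases hik : i = k
    · subst hik
      simp [Matrix.diagonal_apply_eq, Matrix.one_apply_eq, Complex.real_smul]
    · simp [Matrix.diagonal_apply_ne _ hik, Matrix.one_apply_ne hik]
  rw [hrw]
  refine Matrix.PosSemidef.mul_mul_conjTranspose_same ?_ _
  rw [Matrix.posSemidef_diagonal_iff]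
  intro j
  have : (0:ℝ) ≤ c⁻¹ * (z j).im - 1 := by
    have h1 : 1 ≤ c⁻¹ * (z j).im := by
      rw [← div_eq_inv_mul, le_div_iff₀ hcpos]
      simpa using hcle j
    linarith
  exact_mod_cast Complex.zero_le_real.mpr this
end

section
/- Characteristic flow: explicit solution, VDE invariance and evolution of m. Let 𝔞 ∈ ℝ^N, let S be an N×N real matrix with nonnegative entries, let z ∈ ℂ with Im z > 0, and let m₀ ∈ ℂ^N with Im (m₀)_j > 0 for all j satisfy −1/(m₀)_j = z − 𝔞_j + (S m₀)_j for all j. Fix T > 0 and define, for t ∈ [0, T], z_t := e^{(T−t)/2}·z·𝟙 + (1 − e^{(T−t)/2})·𝔞 + 2·sinh((T−t)/2)·S m₀ ∈ ℂ^N and m_t := e^{(t−T)/2}·m₀ ∈ ℂ^N. Then: (i) Im (z_t)_j ≥ Im z > 0 for every j and t (so z_t has all imaginary parts positive), and z_T = z·𝟙; (ii) m_t has positive imaginary parts and satisfies the generalized vector Dyson equation at z_t, i.e. −1/(m_t)_j = (z_t)_j − 𝔞_j + (S m_t)_j for all j and t; (iii) t ↦ z_t is differentiable with ∂_t z_t =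 −S m_t − (z_t − 𝔞)/2; (iv) ∂_t m_t = (1/2)·m_t. -/
open Matrix

/-- **Characteristic flow: explicit solution, VDE invariance and evolution of `m`.**
Given a solution `m₀` of the vector Dyson equation at scalar parameter `z ∈ ℍ`, the
explicitly defined trajectories
`z_t := e^{(T−t)/2}·z·𝟙 + (1 − e^{(T−t)/2})·𝔞 + 2 sinh((T−t)/2)·S m₀` and
`m_t := e^{(t−T)/2}·m₀` satisfy: (i) `Im (z_t)_j ≥ Im z` and `z_T = z·𝟙`;
(ii) `m_t` has positive imaginary parts and solves the generalized VDE at `z_t`;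
(iii) `∂_t z_t = −S m_t − (z_t − 𝔞)/2`; (iv) `∂_t m_t = m_t/2`. -/
theorem characteristic_flow_explicit
    {n : Type*} [Fintype n] [DecidableEq n]
    (a : n → ℝ) (S : Matrix n n ℝ) (hS : ∀ j k, 0 ≤ S j k)
    (z : ℂ) (hz : 0 < z.im)
    (m₀ : n → ℂ) (hm₀ : ∀ j, 0 < (m₀ j).im)
    (hVDE : ∀ j, -(m₀ j)⁻¹ = z - (a j : ℂ) + ((S.map Complex.ofReal) *ᵥ m₀) j)
    (T : ℝ) (hT : 0 < T) :
    -- trajectories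
    ∀ ζ : ℝ → n → ℂ, ∀ m : ℝ → n → ℂ,
    (∀ t j, ζ t j = (Real.exp ((T - t) / 2) : ℂ) * z
        + (1 - (Real.exp ((T - t) / 2) : ℂ)) * (a j : ℂ)
        + 2 * (Real.sinh ((T - t) / 2) : ℂ) * ((S.map Complex.ofReal) *ᵥ m₀) j) →
    (∀ t j, m t j = (Real.exp ((t - T) / 2) : ℂ) * m₀ j) →
    ∀ t ∈ Set.Icc (0 : ℝ) T,
      -- (i)
      ((∀ j, z.im ≤ (ζ t j).im) ∧ (∀ j, ζ T j = z)) ∧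
      -- (ii)
      (∀ j, 0 < (m t j).im ∧
        -(m t j)⁻¹ = ζ t j - (a j : ℂ) + ((S.map Complex.ofReal) *ᵥ m t) j) ∧
      -- (iii)
      (∀ j, HasDerivAt (fun s => ζ s j)
        (-(((S.map Complex.ofReal) *ᵥ m t) j) - (ζ t j - (a j : ℂ)) / 2) t) ∧
      -- (iv)
      (∀ j, HasDerivAt (fun s => m s j) ((1 / 2 : ℂ) * m t j) t) := by
  intro ζ m hζ hm t ht
  obtain ⟨ht0, htT⟩ := ht
  have hr0 : 0 ≤ (T - t) / 2 := by linarith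
  -- imaginary part of S m₀ is nonneg
  have hcim : ∀ j, 0 ≤ (((S.map Complex.ofReal) *ᵥ m₀) j).im := by
    intro j
    simp only [Matrix.mulVec, dotProduct, Matrix.map_apply]
    rw [Complex.im_sum]
    refine Finset.sum_nonneg fun k _ => ?_
    simp only [Complex.mul_im, Complex.ofReal_re, Complex.ofReal_im, zero_mul, add_zero]
    exact mul_nonneg (hS j k) (hm₀ k).le
  -- mulVec of m t
  have hmv : ∀ j, ((S.map Complex.ofReal) *ᵥ (m t)) j
      = (Real.exp ((t - T) / 2) : ℂ) * ((S.map Complex.ofReal) *ᵥ m₀) j := by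
    intro j
    simp only [Matrix.mulVec, dotProduct, Matrix.map_apply, Finset.mul_sum]
    exact Finset.sum_congr rfl fun k _ => by rw [hm t k]; ring
  have hBE : (Real.exp ((t - T) / 2) : ℂ) * (Real.exp ((T - t) / 2) : ℂ) = 1 := by
    rw [← Complex.ofReal_mul, ← Real.exp_add, show (t - T) / 2 + (T - t) / 2 = 0 by ring,
      Real.exp_zero, Complex.ofReal_one]
  refine ⟨⟨fun j => ?_, fun j => ?_⟩, fun j => ⟨?_, ?_⟩, fun j => ?_, fun j => ?_⟩
  · -- Im ζ ≥ Im z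
    have him : (ζ t j).im = Real.exp ((T - t) / 2) * z.im
        + 2 * Real.sinh ((T - t) / 2) * (((S.map Complex.ofReal) *ᵥ m₀) j).im := by
      rw [hζ t j]
      simp only [Complex.add_im, Complex.mul_im, Complex.sub_im, Complex.ofReal_re,
        Complex.ofReal_im, Complex.one_im, Complex.one_re, Complex.mul_re,
        Complex.re_ofNat, Complex.im_ofNat]
      ring
    rw [him]
    nlinarith [Real.one_le_exp hr0, Real.sinh_nonneg_iff.mpr hr0, hcim j, hz]
  · -- ζ T = z
    rw [hζ T j]
    simp
  · -- Im m t > 0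
    rw [hm t j]
    have : ((Real.exp ((t - T) / 2) : ℂ) * m₀ j).im
        = Real.exp ((t - T) / 2) * (m₀ j).im := by
      simp only [Complex.mul_im, Complex.ofReal_re, Complex.ofReal_im, zero_mul, add_zero]
    rw [this]
    exact mul_pos (Real.exp_pos _) (hm₀ j)
  · -- VDE at time t
    have hinv : ((Real.exp ((t - T) / 2) : ℂ))⁻¹ = (Real.exp ((T - t) / 2) : ℂ) :=
      inv_eq_of_mul_eq_one_right hBE
    rw [hm t j, hζ t j, hmv j]
    rw [mul_inv, hinv,
      show -((Real.exp ((T - t) / 2) : ℂ) * (m₀ j)⁻¹)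
        = (Real.exp ((T - t) / 2) : ℂ) * (-(m₀ j)⁻¹) by ring,
      hVDE j, show (t - T) / 2 = -((T - t) / 2) by ring, Real.sinh_eq, Real.exp_neg]
    push_cast
    ring
  · -- derivative of ζ
    have hd1 : HasDerivAt (fun s : ℝ => Real.exp ((T - s) / 2))
        (Real.exp ((T - t) / 2) * (-1 / 2)) t := by
      have : HasDerivAt (fun s : ℝ => (T - s) / 2) (-1 / 2) t :=
        ((hasDerivAt_id t).const_sub T).div_const 2
      exact this.exp
    have hd2 : HasDerivAt (fun s : ℝ => Real.sinh ((T - s) / 2))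
        (Real.cosh ((T - t) / 2) * (-1 / 2)) t := by
      have : HasDerivAt (fun s : ℝ => (T - s) / 2) (-1 / 2) t :=
        ((hasDerivAt_id t).const_sub T).div_const 2
      exact this.sinh
    have h1 := (hd1.ofReal_comp.mul_const z)
    have h2 := ((hd1.ofReal_comp).const_sub 1).mul_const ((a j : ℂ))
    have h3 := ((hd2.ofReal_comp).const_mul (2 : ℂ)).mul_const
      (((S.map Complex.ofReal) *ᵥ m₀) j)
    have hsum := (h1.add h2).add h3
    have hfun : (fun s => ζ s j) = fun s =>
        (Real.exp ((T - s) / 2) : ℂ) * z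
        + (1 - (Real.exp ((T - s) / 2) : ℂ)) * (a j : ℂ)
        + 2 * (Real.sinh ((T - s) / 2) : ℂ) * ((S.map Complex.ofReal) *ᵥ m₀) j := by
      funext s; exact hζ s j
    rw [hfun]
    convert hsum using 1
    case e'_4 => rfl
    case e'_8 => rfl
    rw [hζ t j, hmv j]
    rw [show (t - T) / 2 = -((T - t) / 2) by ring, Real.exp_neg, Real.cosh_eq,
      Real.sinh_eq, Real.exp_neg]
    push_cast
    have hEne : (Real.exp ((T - t) / 2) : ℂ) ≠ 0 := by
      simp [Real.exp_ne_zero]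
    field_simp
    ring
  · -- derivative of m
    have hd : HasDerivAt (fun s : ℝ => Real.exp ((s - T) / 2))
        (Real.exp ((t - T) / 2) * (1 / 2)) t := by
      have : HasDerivAt (fun s : ℝ => (s - T) / 2) (1 / 2) t :=
        ((hasDerivAt_id t).sub_const T).div_const 2
      exact this.exp
    have h := hd.ofReal_comp.mul_const (m₀ j)
    have hfun : (fun s => m s j) = fun s => (Real.exp ((s - T) / 2) : ℂ) * m₀ j := by
      funext s; exact hm s j
    rw [hfun, hm t j]
    convert h using 1
    case e'_4 => rfl
    push_cast
    ring
end

section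
/- Size and integrability of the imaginary part along the characteristic flow. In the setting of the characteristic flow: let 𝔞 ∈ ℝ^N, S an N×N real matrix with nonnegative entries, z ∈ ℂ with Im z > 0, m₀ ∈ ℂ^N with positive imaginary parts satisfying −1/(m₀)_j = z − 𝔞_j + (S m₀)_j, and z_t := e^{(T−t)/2}·z·𝟙 + (1 − e^{(T−t)/2})·𝔞 + 2 sinh((T−t)/2)·S m₀ for t ∈ [0, T]. Assume there are constants 0 < β ≤ B with β ≤ (S·Im m₀)_j ≤ B for all j, and assume T ≤ T₀. Then there exist constants c, C > 0 depending only on β, B, T₀ such that for all t ∈ [0, T] and all j: c·(Im z + (T − t)) ≤ Im (z_t)_j ≤ C·(Im z + (T − t)). Consequently, writing η_t := N^{−1}Σ_j Im (z_t)_j, for every α > 1 there is a constant C' depending only on c, C, α such that ∫₀^t η_s^{−α} ds ≤ C'·η_t^{1−α} for all t ∈ [0, T], and ∫₀^t η_s^{−1} ds ≤ c^{−1}·log((Im z + T)/(Im z + T − t)). -/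
open Matrix

/-- Hypotheses on the data of the characteristic flow: nonnegative variance matrix,
spectral parameter in the upper half-plane, a solution `m₀` of the vector Dyson
equation at `z` with positive imaginary parts, terminal time `0 < T ≤ T₀`, and the
two-sided bound `β ≤ (S·Im m₀)_j ≤ B`. -/
def FlowHyp (β B T₀ : ℝ) (N : ℕ) (a : Fin N → ℝ) (S : Matrix (Fin N) (Fin N) ℝ)
    (z : ℂ) (m₀ : Fin N → ℂ) (T : ℝ) : Prop :=
  (∀ j k, 0 ≤ S j k) ∧ 0 < z.im ∧ (∀ j, 0 < (m₀ j).im) ∧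
  (∀ j, -(m₀ j)⁻¹ = z - (a j : ℂ) + ((S.map Complex.ofReal) *ᵥ m₀) j) ∧
  0 < T ∧ T ≤ T₀ ∧
  (∀ j, β ≤ ∑ k, S j k * (m₀ k).im ∧ ∑ k, S j k * (m₀ k).im ≤ B)

/-- The explicit solution of the characteristic flow with terminal condition
`z_T = z·𝟙`. -/
noncomputable def flowZ (N : ℕ) (a : Fin N → ℝ) (S : Matrix (Fin N) (Fin N) ℝ)
    (z : ℂ) (m₀ : Fin N → ℂ) (T t : ℝ) (j : Fin N) : ℂ :=
  (Real.exp ((T - t) / 2) : ℂ) * z + (1 - (Real.exp ((T - t) / 2) : ℂ)) * (a j : ℂ)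
    + 2 * (Real.sinh ((T - t) / 2) : ℂ) * ((S.map Complex.ofReal) *ᵥ m₀) j

/-- The averaged imaginary part `η_t := N⁻¹ Σ_j Im (z_t)_j` along the flow. -/
noncomputable def flowEta (N : ℕ) (a : Fin N → ℝ) (S : Matrix (Fin N) (Fin N) ℝ)
    (z : ℂ) (m₀ : Fin N → ℂ) (T t : ℝ) : ℝ :=
  (N : ℝ)⁻¹ * ∑ j, (flowZ N a S z m₀ T t j).im

lemma flowZ_im (N : ℕ) (a : Fin N → ℝ) (S : Matrix (Fin N) (Fin N) ℝ)
    (z : ℂ) (m₀ : Fin N → ℂ) (T t : ℝ) (j : Fin N) :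
    (flowZ N a S z m₀ T t j).im
      = Real.exp ((T - t) / 2) * z.im
        + 2 * Real.sinh ((T - t) / 2) * ∑ k, S j k * (m₀ k).im := by
  simp [flowZ, Matrix.mulVec, dotProduct, Complex.im_sum, Complex.mul_im,
    Finset.mul_sum, -Complex.ofReal_exp, -Complex.ofReal_sinh]

lemma sinh_le_mul_exp {x : ℝ} (hx : 0 ≤ x) : Real.sinh x ≤ x * Real.exp x := by
  rw [Real.sinh_eq]
  have h1 : (1:ℝ) - x ≤ Real.exp (-x) := by linarith [Real.add_one_le_exp (-x)]
  have h2 : Real.exp (-x) * Real.exp x = 1 := by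
    rw [← Real.exp_add]; simp
  nlinarith [Real.exp_pos x, Real.one_le_exp hx]

lemma key (β B T₀ : ℝ) (hβ : 0 < β) {N a S z m₀ T}
    (h : FlowHyp β B T₀ N a S z m₀ T) {t : ℝ} (ht : t ∈ Set.Icc (0:ℝ) T) (j : Fin N) :
    min 1 β * (z.im + (T - t)) ≤ (flowZ N a S z m₀ T t j).im ∧
    (flowZ N a S z m₀ T t j).im ≤ Real.exp (T₀ / 2) * max 1 B * (z.im + (T - t)) := by
  obtain ⟨hS, hz, hm, _, hT, hTT0, hv⟩ := h
  obtain ⟨hvl, hvu⟩ := hv j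
  obtain ⟨ht0, htT⟩ := ht
  rw [flowZ_im]
  set s := (T - t) / 2 with hs
  have h2s : T - t = 2 * s := by rw [hs]; ring
  have hs0 : 0 ≤ s := by rw [hs]; linarith
  have hsT : s ≤ T₀ / 2 := by rw [hs]; linarith
  have h1 : s ≤ Real.sinh s := Real.self_le_sinh_iff.2 hs0
  have h2 : Real.sinh s ≤ s * Real.exp (T₀ / 2) :=
    le_trans (sinh_le_mul_exp hs0)
      (mul_le_mul_of_nonneg_left (Real.exp_le_exp.2 hsT) hs0)
  have he1 : 1 ≤ Real.exp s := Real.one_le_exp hs0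
  have he2 : Real.exp s ≤ Real.exp (T₀ / 2) := Real.exp_le_exp.2 hsT
  have hβv : 0 < ∑ k, S j k * (m₀ k).im := lt_of_lt_of_le hβ hvl
  have hsinh0 : 0 ≤ Real.sinh s := Real.sinh_nonneg_iff.2 hs0
  have hE : (0:ℝ) < Real.exp (T₀ / 2) := Real.exp_pos _
  have hM : (1:ℝ) ≤ max 1 B := le_max_left 1 B
  have hvM : ∑ k, S j k * (m₀ k).im ≤ max 1 B := hvu.trans (le_max_right 1 B)
  constructor
  · nlinarith [min_le_left (1:ℝ) β, min_le_right (1:ℝ) β]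
  · have k1 : Real.exp s * z.im ≤ Real.exp (T₀ / 2) * max 1 B * z.im :=
      mul_le_mul_of_nonneg_right (he2.trans (le_mul_of_one_le_right hE.le hM)) hz.le
    have k2 : Real.sinh s * ∑ k, S j k * (m₀ k).im ≤ s * (Real.exp (T₀ / 2) * max 1 B) := by
      calc Real.sinh s * ∑ k, S j k * (m₀ k).im
          ≤ (s * Real.exp (T₀ / 2)) * max 1 B :=
            mul_le_mul h2 hvM hβv.le (by positivity)
        _ = s * (Real.exp (T₀ / 2) * max 1 B) := by ring
    rw [h2s]
    nlinarith [k1, k2]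

lemma eta_key (β B T₀ : ℝ) (hβ : 0 < β) {N a S z m₀ T} (hN : 0 < N)
    (h : FlowHyp β B T₀ N a S z m₀ T) {t : ℝ} (ht : t ∈ Set.Icc (0:ℝ) T) :
    min 1 β * (z.im + (T - t)) ≤ flowEta N a S z m₀ T t ∧
    flowEta N a S z m₀ T t ≤ Real.exp (T₀ / 2) * max 1 B * (z.im + (T - t)) := by
  have hN' : (0:ℝ) < N := Nat.cast_pos.2 hN
  have hL := Finset.card_nsmul_le_sum Finset.univ (fun j => (flowZ N a S z m₀ T t j).im)
    (min 1 β * (z.im + (T - t))) (fun j _ => (key β B T₀ hβ h ht j).1)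
  have hU := Finset.sum_le_card_nsmul Finset.univ (fun j => (flowZ N a S z m₀ T t j).im)
    (Real.exp (T₀ / 2) * max 1 B * (z.im + (T - t))) (fun j _ => (key β B T₀ hβ h ht j).2)
  simp only [Finset.card_univ, Fintype.card_fin, nsmul_eq_mul] at hL hU
  unfold flowEta
  constructor
  · calc min 1 β * (z.im + (T - t))
        = (N : ℝ)⁻¹ * ((N : ℝ) * (min 1 β * (z.im + (T - t)))) := by field_simp
      _ ≤ (N : ℝ)⁻¹ * ∑ j, (flowZ N a S z m₀ T t j).im :=
          mul_le_mul_of_nonneg_left hL (inv_nonneg.2 hN'.le)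
  · calc (N : ℝ)⁻¹ * ∑ j, (flowZ N a S z m₀ T t j).im
        ≤ (N : ℝ)⁻¹ * ((N : ℝ) * (Real.exp (T₀ / 2) * max 1 B * (z.im + (T - t)))) :=
          mul_le_mul_of_nonneg_left hU (inv_nonneg.2 hN'.le)
      _ = _ := by field_simp

lemma eta_cont (N : ℕ) (a : Fin N → ℝ) (S : Matrix (Fin N) (Fin N) ℝ)
    (z : ℂ) (m₀ : Fin N → ℂ) (T : ℝ) : Continuous (flowEta N a S z m₀ T) := by
  unfold flowEta
  refine continuous_const.mul (continuous_finset_sum _ fun j _ => ?_)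
  have : (fun t => (flowZ N a S z m₀ T t j).im)
      = fun t => Real.exp ((T - t) / 2) * z.im
        + 2 * Real.sinh ((T - t) / 2) * ∑ k, S j k * (m₀ k).im :=
    funext fun t => flowZ_im N a S z m₀ T t j
  rw [this]; fun_prop

lemma int_alpha {η : ℝ → ℝ} {c C d T t α : ℝ} (hc : 0 < c) (hC : 0 < C) (hd : 0 < d)
    (hcont : Continuous η)
    (hlow : ∀ s ∈ Set.Icc (0:ℝ) T, c * (d + (T - s)) ≤ η s)
    (hup : ∀ s ∈ Set.Icc (0:ℝ) T, η s ≤ C * (d + (T - s)))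
    (hα : 1 < α) (ht : t ∈ Set.Icc (0:ℝ) T) :
    ∫ s in (0:ℝ)..t, η s ^ (-α) ≤ (c ^ (-α) * C ^ (α - 1) / (α - 1)) * η t ^ (1 - α) := by
  obtain ⟨ht0, htT⟩ := ht
  set a0 := d + T with ha0
  have hsub : ∀ s : ℝ, d + (T - s) = a0 - s := fun s => by rw [ha0]; ring
  have hXpos : ∀ s ∈ Set.Icc (0:ℝ) t, 0 < a0 - s := fun s hs => by
    have := hs.2; rw [ha0]; linarith
  have hmemT : ∀ s ∈ Set.Icc (0:ℝ) t, s ∈ Set.Icc (0:ℝ) T := fun s hs =>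
    ⟨hs.1, hs.2.trans htT⟩
  have hηpos : ∀ s ∈ Set.Icc (0:ℝ) t, 0 < η s := fun s hs =>
    lt_of_lt_of_le (by have := hXpos s hs; rw [hsub s] at *; positivity)
      (hlow s (hmemT s hs))
  have huIcc : Set.uIcc (0:ℝ) t = Set.Icc 0 t := Set.uIcc_of_le ht0
  have hf_int : IntervalIntegrable (fun s => η s ^ (-α)) MeasureTheory.volume 0 t := by
    apply ContinuousOn.intervalIntegrable
    rw [huIcc]
    exact hcont.continuousOn.rpow_const fun x hx => Or.inl (ne_of_gt (hηpos x hx))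
  have hg_cont : Continuous fun s : ℝ => c * (a0 - s) :=
    continuous_const.mul (continuous_const.sub continuous_id)
  have hg_int : IntervalIntegrable (fun s => (c * (a0 - s)) ^ (-α))
      MeasureTheory.volume 0 t := by
    apply ContinuousOn.intervalIntegrable
    rw [huIcc]
    exact hg_cont.continuousOn.rpow_const fun x hx =>
      Or.inl (ne_of_gt (by have := hXpos x hx; positivity))
  have step1 : ∫ s in (0:ℝ)..t, η s ^ (-α) ≤ ∫ s in (0:ℝ)..t, (c * (a0 - s)) ^ (-α) := by
    apply intervalIntegral.integral_mono_on ht0 hf_int hg_int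
    intro s hs
    exact Real.rpow_le_rpow_of_nonpos (by have := hXpos s hs; positivity)
      (by rw [← hsub s]; exact hlow s (hmemT s hs)) (by linarith)
  have step2 : ∫ s in (0:ℝ)..t, (c * (a0 - s)) ^ (-α)
      = c ^ (-α) * ∫ s in (0:ℝ)..t, (a0 - s) ^ (-α) := by
    rw [← intervalIntegral.integral_const_mul]
    apply intervalIntegral.integral_congr
    intro s hs
    rw [huIcc] at hs
    exact Real.mul_rpow hc.le (hXpos s hs).le
  have step3 : ∫ s in (0:ℝ)..t, (a0 - s) ^ (-α)
      = (a0 ^ (-α + 1) - (a0 - t) ^ (-α + 1)) / (-α + 1) := by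
    rw [intervalIntegral.integral_comp_sub_left (fun u => u ^ (-α)) a0, sub_zero]
    apply integral_rpow
    refine Or.inr ⟨by intro h; rw [neg_inj] at h; linarith, ?_⟩
    rw [Set.uIcc_of_le (by linarith : a0 - t ≤ a0)]
    intro h0
    have := h0.1
    have := hXpos t ⟨ht0, le_refl t⟩
    linarith
  have hexp : -α + 1 = 1 - α := by ring
  rw [hexp] at step3
  -- final estimate
  have hP : 0 < (a0 - t) ^ (1 - α) :=
    Real.rpow_pos_of_pos (hXpos t ⟨ht0, le_refl t⟩) _
  have hQ : 0 < a0 ^ (1 - α) := Real.rpow_pos_of_pos (by rw [ha0]; linarith) _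
  have hcα : 0 < c ^ (-α) := Real.rpow_pos_of_pos hc _
  have hηt : 0 < η t := hηpos t ⟨ht0, le_refl t⟩
  have hPC : (a0 - t) ^ (1 - α) ≤ C ^ (α - 1) * η t ^ (1 - α) := by
    have h1 : η t ^ (1 - α) ≥ (C * (a0 - t)) ^ (1 - α) :=
      Real.rpow_le_rpow_of_nonpos hηt (by rw [← hsub t]; exact hup t ⟨ht0, htT⟩)
        (by linarith)
    have h2 : (C * (a0 - t)) ^ (1 - α) = C ^ (1 - α) * (a0 - t) ^ (1 - α) :=
      Real.mul_rpow hC.le (hXpos t ⟨ht0, le_refl t⟩).le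
    have h3 : C ^ (α - 1) * C ^ (1 - α) = 1 := by
      rw [← Real.rpow_add hC]; norm_num
    calc (a0 - t) ^ (1 - α) = (C ^ (α - 1) * C ^ (1 - α)) * (a0 - t) ^ (1 - α) := by
          rw [h3, one_mul]
      _ = C ^ (α - 1) * ((C * (a0 - t)) ^ (1 - α)) := by rw [h2]; ring
      _ ≤ C ^ (α - 1) * η t ^ (1 - α) := by
          apply mul_le_mul_of_nonneg_left h1
          positivity
  have hflip : (a0 ^ (1 - α) - (a0 - t) ^ (1 - α)) / (1 - α)
      = ((a0 - t) ^ (1 - α) - a0 ^ (1 - α)) / (α - 1) := by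
    rw [show (1 - α) = -(α - 1) by ring, div_neg, ← neg_div, neg_sub]
  calc ∫ s in (0:ℝ)..t, η s ^ (-α)
      ≤ c ^ (-α) * ((a0 ^ (1 - α) - (a0 - t) ^ (1 - α)) / (1 - α)) := by
        rw [← step3, ← step2]; exact step1
    _ ≤ c ^ (-α) * ((a0 - t) ^ (1 - α) / (α - 1)) := by
        apply mul_le_mul_of_nonneg_left _ hcα.le
        rw [hflip]
        exact div_le_div_of_nonneg_right (by linarith) (by linarith)
    _ ≤ c ^ (-α) * ((C ^ (α - 1) * η t ^ (1 - α)) / (α - 1)) := by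
        apply mul_le_mul_of_nonneg_left _ hcα.le
        exact div_le_div_of_nonneg_right hPC (by linarith)
    _ = (c ^ (-α) * C ^ (α - 1) / (α - 1)) * η t ^ (1 - α) := by ring

lemma int_one {η : ℝ → ℝ} {c d T t : ℝ} (hc : 0 < c) (hd : 0 < d)
    (hcont : Continuous η)
    (hlow : ∀ s ∈ Set.Icc (0:ℝ) T, c * (d + (T - s)) ≤ η s)
    (ht : t ∈ Set.Icc (0:ℝ) T) :
    ∫ s in (0:ℝ)..t, (η s)⁻¹ ≤ c⁻¹ * Real.log ((d + T) / (d + (T - t))) := by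
  obtain ⟨ht0, htT⟩ := ht
  set a0 := d + T with ha0
  have hsub : ∀ s : ℝ, d + (T - s) = a0 - s := fun s => by rw [ha0]; ring
  have hXpos : ∀ s ∈ Set.Icc (0:ℝ) t, 0 < a0 - s := fun s hs => by
    have := hs.2; rw [ha0]; linarith
  have hmemT : ∀ s ∈ Set.Icc (0:ℝ) t, s ∈ Set.Icc (0:ℝ) T := fun s hs =>
    ⟨hs.1, hs.2.trans htT⟩
  have hηpos : ∀ s ∈ Set.Icc (0:ℝ) t, 0 < η s := fun s hs =>
    lt_of_lt_of_le (by have := hXpos s hs; rw [hsub s] at *; positivity)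
      (hlow s (hmemT s hs))
  have huIcc : Set.uIcc (0:ℝ) t = Set.Icc 0 t := Set.uIcc_of_le ht0
  have hf_int : IntervalIntegrable (fun s => (η s)⁻¹) MeasureTheory.volume 0 t := by
    apply ContinuousOn.intervalIntegrable
    rw [huIcc]
    exact hcont.continuousOn.inv₀ fun x hx => ne_of_gt (hηpos x hx)
  have hg_cont : Continuous fun s : ℝ => c * (a0 - s) :=
    continuous_const.mul (continuous_const.sub continuous_id)
  have hg_int : IntervalIntegrable (fun s => (c * (a0 - s))⁻¹) MeasureTheory.volume 0 t := by
    apply ContinuousOn.intervalIntegrable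
    rw [huIcc]
    exact hg_cont.continuousOn.inv₀ fun x hx =>
      ne_of_gt (by have := hXpos x hx; positivity)
  have step1 : ∫ s in (0:ℝ)..t, (η s)⁻¹ ≤ ∫ s in (0:ℝ)..t, (c * (a0 - s))⁻¹ := by
    apply intervalIntegral.integral_mono_on ht0 hf_int hg_int
    intro s hs
    exact inv_anti₀ (by have := hXpos s hs; positivity)
      (by rw [← hsub s]; exact hlow s (hmemT s hs))
  have step2 : ∫ s in (0:ℝ)..t, (c * (a0 - s))⁻¹
      = c⁻¹ * ∫ s in (0:ℝ)..t, (a0 - s)⁻¹ := by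
    rw [← intervalIntegral.integral_const_mul]
    apply intervalIntegral.integral_congr
    intro s hs
    exact mul_inv c (a0 - s)
  have step3 : ∫ s in (0:ℝ)..t, (a0 - s)⁻¹ = Real.log (a0 / (a0 - t)) := by
    rw [intervalIntegral.integral_comp_sub_left (fun u => u⁻¹) a0, sub_zero]
    apply integral_inv
    rw [Set.uIcc_of_le (by linarith : a0 - t ≤ a0)]
    intro h0
    have := h0.1
    have := hXpos t ⟨ht0, le_refl t⟩
    linarith
  rw [hsub t]
  calc ∫ s in (0:ℝ)..t, (η s)⁻¹ ≤ c⁻¹ * Real.log (a0 / (a0 - t)) := by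
        rw [← step3, ← step2]; exact step1
    _ = c⁻¹ * Real.log (a0 / (a0 - t)) := rfl

/-- **Size and integrability of the imaginary part along the characteristic flow.**
There are constants `c, C > 0` depending only on `β, B, T₀` such that
`c·(Im z + (T−t)) ≤ Im (z_t)_j ≤ C·(Im z + (T−t))`; consequently, for every `α > 1`
there is `C'` with `∫₀^t η_s^{−α} ds ≤ C'·η_t^{1−α}`, and
`∫₀^t η_s^{−1} ds ≤ c⁻¹·log((Im z + T)/(Im z + T − t))`. -/
theorem flow_eta_bounds (β B T₀ : ℝ) (hβ : 0 < β) (hβB : β ≤ B) (hT₀ : 0 < T₀) :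
    ∃ c C : ℝ, 0 < c ∧ 0 < C ∧
      (∀ N a S z m₀ T, 0 < N → FlowHyp β B T₀ N a S z m₀ T →
        ∀ t ∈ Set.Icc (0 : ℝ) T, ∀ j,
          c * (z.im + (T - t)) ≤ (flowZ N a S z m₀ T t j).im ∧
          (flowZ N a S z m₀ T t j).im ≤ C * (z.im + (T - t))) ∧
      (∀ α : ℝ, 1 < α → ∃ C' : ℝ, 0 < C' ∧
        ∀ N a S z m₀ T, 0 < N → FlowHyp β B T₀ N a S z m₀ T →
          ∀ t ∈ Set.Icc (0 : ℝ) T,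
            ∫ s in (0 : ℝ)..t, (flowEta N a S z m₀ T s) ^ (-α)
              ≤ C' * (flowEta N a S z m₀ T t) ^ (1 - α)) ∧
      (∀ N a S z m₀ T, 0 < N → FlowHyp β B T₀ N a S z m₀ T →
        ∀ t ∈ Set.Icc (0 : ℝ) T,
          ∫ s in (0 : ℝ)..t, (flowEta N a S z m₀ T s)⁻¹
            ≤ c⁻¹ * Real.log ((z.im + T) / (z.im + (T - t)))) := by
  have hc : (0:ℝ) < min 1 β := lt_min one_pos hβ
  have hC : (0:ℝ) < Real.exp (T₀ / 2) * max 1 B := by positivity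
  refine ⟨min 1 β, Real.exp (T₀ / 2) * max 1 B, hc, hC, ?_, ?_, ?_⟩
  · intro N a S z m₀ T _ h t ht j
    exact key β B T₀ hβ h ht j
  · intro α hα
    refine ⟨(min 1 β) ^ (-α) * (Real.exp (T₀ / 2) * max 1 B) ^ (α - 1) / (α - 1),
      div_pos (mul_pos (Real.rpow_pos_of_pos hc _) (Real.rpow_pos_of_pos hC _))
        (by linarith), ?_⟩
    intro N a S z m₀ T hN h t ht
    exact int_alpha hc hC h.2.1 (eta_cont N a S z m₀ T)
      (fun s hs => (eta_key β B T₀ hβ hN h hs).1)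
      (fun s hs => (eta_key β B T₀ hβ hN h hs).2) hα ht
  · intro N a S z m₀ T hN h t ht
    exact int_one hc h.2.1 (eta_cont N a S z m₀ T)
      (fun s hs => (eta_key β B T₀ hβ hN h hs).1) ht
end

section
/- Quantitative two-body stability inequality. Let S be a real symmetric N×N matrix with nonnegative entries, 𝔞 ∈ ℝ^N, and z₁, z₂ ∈ ℂ with Im z₁ > 0 and Im z₂ > 0. Let m₁, m₂ ∈ ℂ^N with positive imaginary parts solve the vector Dyson equations −1/(m_i)_j = z_i − 𝔞_j + (S m_i)_j for i = 1, 2 and all j. Set P := conj(m₁) ⊙ m₂ (all entries nonzero), U := diag(P/|P|), and F := diag(|P|^{1/2})·S·diag(|P|^{1/2}), a real symmetric matrix with nonnegative entries. Let v ∈ ℝ^N be a unit vector with F v = ‖F‖·v, where ‖F‖ is the ℓ²-operator norm of F. Then |z̄₁ − z₂| · |⟨v, |P|^{1/2}⟩| ≤ (‖(U − I)·v‖₂ + |1 − ‖F‖|) · ‖ |P|^{−1/2} ⊙ (conj(m₁) − m₂) ‖₂, where ⟨v, w⟩ := Σ_j v̄_j w_j and ‖·‖₂ is the Euclidean norm.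 -/
open Matrix

private lemma cs_sum' {n : Type*} [Fintype n] (f g : n → ℂ) :
    ‖∑ j, f j * g j‖ ≤
      Real.sqrt (∑ j, ‖f j‖ ^ 2) * Real.sqrt (∑ j, ‖g j‖ ^ 2) := by
  have h := norm_inner_le_norm (𝕜 := ℂ) (E := EuclideanSpace ℂ n)
      ((WithLp.equiv 2 _).symm fun j => starRingEnd ℂ (f j)) ((WithLp.equiv 2 _).symm g)
  simp only [EuclideanSpace.norm_eq, PiLp.inner_apply, RCLike.inner_apply,
    WithLp.equiv_symm_apply, PiLp.toLp_apply, starRingEnd_apply, star_star] at h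
  simpa [mul_comm] using h

/-- **Quantitative two-body stability inequality.**
For solutions `m₁, m₂` of the vector Dyson equation at `z₁, z₂ ∈ ℍ` with real data
`(𝔞, S)`, setting `P := conj(m₁) ⊙ m₂`, `U := diag(P/|P|)`,
`F := diag(|P|^{1/2})·S·diag(|P|^{1/2})` and letting `v` be a unit eigenvector of `F`
for its operator norm `‖F‖`, one has
`|z̄₁ − z₂|·|⟨v, |P|^{1/2}⟩| ≤ (‖(U − I)v‖₂ + |1 − ‖F‖|)·‖|P|^{−1/2} ⊙ (conj m₁ − m₂)‖₂`. -/
theorem two_body_stability_inequality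
    {n : Type*} [Fintype n] [DecidableEq n]
    (S : Matrix n n ℝ) (hSsymm : S.IsSymm) (hSpos : ∀ j k, 0 ≤ S j k)
    (a : n → ℝ) (z₁ z₂ : ℂ) (hz₁ : 0 < z₁.im) (hz₂ : 0 < z₂.im)
    (m₁ m₂ : n → ℂ) (hm₁ : ∀ j, 0 < (m₁ j).im) (hm₂ : ∀ j, 0 < (m₂ j).im)
    (hVDE₁ : ∀ j, -(m₁ j)⁻¹ = z₁ - (a j : ℂ) + ((S.map Complex.ofReal) *ᵥ m₁) j)
    (hVDE₂ : ∀ j, -(m₂ j)⁻¹ = z₂ - (a j : ℂ) + ((S.map Complex.ofReal) *ᵥ m₂) j)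
    (P : n → ℂ) (hP : P = fun j => (starRingEnd ℂ) (m₁ j) * m₂ j)
    (U : Matrix n n ℂ)
    (hU : U = Matrix.diagonal (fun j => P j / (‖P j‖ : ℂ)))
    (F : Matrix n n ℝ)
    (hF : F = fun j k => Real.sqrt (‖P j‖) * S j k *
      Real.sqrt (‖P k‖))
    (v : n → ℝ) (hv : ∑ j, v j ^ 2 = 1)
    (hvF : F *ᵥ v = ‖(Matrix.toEuclideanCLM (𝕜 := ℝ) F :
        EuclideanSpace ℝ n →L[ℝ] EuclideanSpace ℝ n)‖ • v) :
    ‖(starRingEnd ℂ) z₁ - z₂‖ * |∑ j, v j * Real.sqrt (‖P j‖)|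
      ≤ (Real.sqrt (∑ j, ‖((U - 1) *ᵥ fun k => (v k : ℂ)) j‖ ^ 2)
          + |1 - ‖(Matrix.toEuclideanCLM (𝕜 := ℝ) F :
              EuclideanSpace ℝ n →L[ℝ] EuclideanSpace ℝ n)‖|) *
        Real.sqrt (∑ j,
          ‖((Real.sqrt (‖P j‖))⁻¹ : ℂ) *
              ((starRingEnd ℂ) (m₁ j) - m₂ j)‖ ^ 2) := by
  classical
  set c : ℝ := ‖(Matrix.toEuclideanCLM (𝕜 := ℝ) F :
      EuclideanSpace ℝ n →L[ℝ] EuclideanSpace ℝ n)‖ with hc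
  set d : ℂ := (starRingEnd ℂ) z₁ - z₂ with hd
  set h : n → ℂ := fun j => (starRingEnd ℂ) (m₁ j) - m₂ j with hh
  set w : n → ℂ := fun j => ((Real.sqrt (‖P j‖))⁻¹ : ℂ) * h j with hw
  set u : n → ℂ := fun j => P j / (‖P j‖ : ℂ) with hu
  -- basic nonvanishing facts
  have hm₁0 : ∀ j, m₁ j ≠ 0 := fun j hj => by simpa [hj] using (hm₁ j)
  have hm₂0 : ∀ j, m₂ j ≠ 0 := fun j hj => by simpa [hj] using (hm₂ j)
  have hP0 : ∀ j, P j ≠ 0 := by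
    intro j
    rw [hP]
    exact mul_ne_zero (by simpa using hm₁0 j) (hm₂0 j)
  have habs : ∀ j, 0 < ‖P j‖ := fun j => norm_pos_iff.mpr (hP0 j)
  have hr0 : ∀ j, 0 < Real.sqrt (‖P j‖) := fun j => Real.sqrt_pos.2 (habs j)
  have hrc : ∀ j, ((Real.sqrt (‖P j‖) : ℝ) : ℂ) ≠ 0 := by
    intro j
    simpa using (hr0 j).ne'
  have hrr : ∀ j, ((Real.sqrt (‖P j‖) : ℝ) : ℂ) * (Real.sqrt (‖P j‖) : ℝ)
      = (‖P j‖ : ℂ) := by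
    intro j
    rw [← Complex.ofReal_mul, Real.mul_self_sqrt (habs j).le]
  -- conjugated first Dyson equation
  have hVDE₁' : ∀ j, -((starRingEnd ℂ) (m₁ j))⁻¹ =
      (starRingEnd ℂ) z₁ - (a j : ℂ) + ∑ k, (S j k : ℂ) * (starRingEnd ℂ) (m₁ k) := by
    intro j
    have e := congrArg (starRingEnd ℂ) (hVDE₁ j)
    simpa [Matrix.mulVec, dotProduct, Matrix.map_apply, map_sum,
      Complex.conj_ofReal] using e
  have hVDE₂' : ∀ j, -(m₂ j)⁻¹ = z₂ - (a j : ℂ) + ∑ k, (S j k : ℂ) * m₂ k := by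
    intro j
    simpa [Matrix.mulVec, dotProduct, Matrix.map_apply] using hVDE₂ j
  -- difference identity
  have step1 : ∀ j, (m₂ j)⁻¹ - ((starRingEnd ℂ) (m₁ j))⁻¹ = d + ∑ k, (S j k : ℂ) * h k := by
    intro j
    have e2 : ∑ k, (S j k : ℂ) * h k =
        (∑ k, (S j k : ℂ) * (starRingEnd ℂ) (m₁ k)) - ∑ k, (S j k : ℂ) * m₂ k := by
      rw [← Finset.sum_sub_distrib]
      exact Finset.sum_congr rfl fun k _ => by rw [hh]; ring
    rw [e2, hd]
    linear_combination hVDE₁' j - hVDE₂' j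
  have step2 : ∀ j, h j = P j * (d + ∑ k, (S j k : ℂ) * h k) := by
    intro j
    have hA : (starRingEnd ℂ) (m₁ j) ≠ 0 := by simpa using hm₁0 j
    rw [← step1 j, hP, hh]
    simp only
    rw [mul_sub, mul_inv_cancel_right₀ (hm₂0 j),
      mul_comm ((starRingEnd ℂ) (m₁ j)) (m₂ j), mul_inv_cancel_right₀ hA]
  -- conjugate of the phase
  have hcu : ∀ j, (starRingEnd ℂ) (u j) = (‖P j‖ : ℂ) / P j := by
    intro j
    rw [hu]
    simp only
    rw [map_div₀, Complex.conj_ofReal, div_eq_div_iff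
      (by simpa [Complex.ext_iff] using (norm_ne_zero_iff.mpr (hP0 j))) (hP0 j)]
    rw [← Complex.normSq_eq_conj_mul_self, Complex.normSq_eq_norm_sq]
    push_cast
    ring
  -- key pointwise identity
  have key : ∀ j, (starRingEnd ℂ) (u j) * w j =
      d * (Real.sqrt (‖P j‖) : ℂ) + ∑ k, (F j k : ℂ) * w k := by
    intro j
    have hFw : ∑ k, (F j k : ℂ) * w k
        = (Real.sqrt (‖P j‖) : ℂ) * ∑ k, (S j k : ℂ) * h k := by
      rw [Finset.mul_sum]
      refine Finset.sum_congr rfl fun k _ => ?_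
      simp only [hw, hF]
      push_cast
      field_simp [hrc k]
    rw [hFw, hcu j]
    simp only [hw]
    rw [step2 j]
    calc (‖P j‖ : ℂ) / P j
          * (((Real.sqrt (‖P j‖) : ℝ) : ℂ)⁻¹
            * (P j * (d + ∑ k, (S j k : ℂ) * h k)))
        = ((‖P j‖ : ℂ) * ((Real.sqrt (‖P j‖) : ℝ) : ℂ)⁻¹)
            * (d + ∑ k, (S j k : ℂ) * h k) * (P j * (P j)⁻¹) := by
          rw [div_eq_mul_inv]; ring
      _ = ((‖P j‖ : ℂ) * ((Real.sqrt (‖P j‖) : ℝ) : ℂ)⁻¹)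
            * (d + ∑ k, (S j k : ℂ) * h k) := by
          rw [mul_inv_cancel₀ (hP0 j), mul_one]
      _ = ((Real.sqrt (‖P j‖) : ℝ) : ℂ) * (d + ∑ k, (S j k : ℂ) * h k) := by
          rw [← hrr j, mul_inv_cancel_right₀ (hrc j)]
      _ = d * ((Real.sqrt (‖P j‖) : ℝ) : ℂ)
            + ((Real.sqrt (‖P j‖) : ℝ) : ℂ) * ∑ k, (S j k : ℂ) * h k := by
          ring
  -- eigen relation transposed
  have hFsymm : ∀ j k, F j k = F k j := by
    intro j k
    rw [hF]
    simp only
    rw [hSsymm.apply k j]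
    ring
  have hFv : ∀ k, ∑ j, F j k * v j = c * v k := by
    intro k
    have e := congrFun hvF k
    simp only [Matrix.mulVec, dotProduct, Pi.smul_apply, smul_eq_mul] at e
    rw [← e]
    exact Finset.sum_congr rfl fun j _ => by rw [hFsymm j k]
  -- abbreviations for the three sums
  have A2 : ∑ j, (v j : ℂ) * ∑ k, (F j k : ℂ) * w k = (c : ℂ) * ∑ k, (v k : ℂ) * w k := by
    calc ∑ j, (v j : ℂ) * ∑ k, (F j k : ℂ) * w k
        = ∑ j, ∑ k, (v j : ℂ) * ((F j k : ℂ) * w k) := by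
          exact Finset.sum_congr rfl fun j _ => Finset.mul_sum _ _ _
      _ = ∑ k, ∑ j, (v j : ℂ) * ((F j k : ℂ) * w k) := Finset.sum_comm
      _ = ∑ k, ((c * v k : ℝ) : ℂ) * w k := by
          refine Finset.sum_congr rfl fun k _ => ?_
          rw [← hFv k]
          push_cast
          rw [Finset.sum_mul]
          exact Finset.sum_congr rfl fun j _ => by ring
      _ = (c : ℂ) * ∑ k, (v k : ℂ) * w k := by
          rw [Finset.mul_sum]
          push_cast
          exact Finset.sum_congr rfl fun k _ => by ring
  have A1 : ∑ j, (v j : ℂ) * ((starRingEnd ℂ) (u j) * w j)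
      = d * (∑ j, (v j : ℂ) * (Real.sqrt (‖P j‖) : ℂ))
        + ∑ j, (v j : ℂ) * ∑ k, (F j k : ℂ) * w k := by
    rw [Finset.mul_sum, ← Finset.sum_add_distrib]
    exact Finset.sum_congr rfl fun j _ => by rw [key j]; ring
  have A3 : ∑ j, ((starRingEnd ℂ) (u j) - 1) * (v j : ℂ) * w j
      = (∑ j, (v j : ℂ) * ((starRingEnd ℂ) (u j) * w j)) - ∑ j, (v j : ℂ) * w j := by
    rw [← Finset.sum_sub_distrib]
    exact Finset.sum_congr rfl fun j _ => by ring
  have hkeysum : d * (∑ j, (v j : ℂ) * (Real.sqrt (‖P j‖) : ℂ))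
      = (∑ j, ((starRingEnd ℂ) (u j) - 1) * (v j : ℂ) * w j)
        + ((1 : ℂ) - (c : ℂ)) * ∑ j, (v j : ℂ) * w j := by
    linear_combination -A1 - A3 - A2
  -- norms
  have hUv : ∀ j, ((U - 1) *ᵥ fun k => ((v k : ℝ) : ℂ)) j = (u j - 1) * (v j : ℂ) := by
    intro j
    simp [hU, Matrix.mulVec, dotProduct, Matrix.sub_apply, Matrix.diagonal_apply,
      Matrix.one_apply, ite_mul, sub_mul, Finset.sum_ite_eq]
  have hnorm_eq : ∀ j, ‖((starRingEnd ℂ) (u j) - 1) * (v j : ℂ)‖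
      = ‖((U - 1) *ᵥ fun k => ((v k : ℝ) : ℂ)) j‖ := by
    intro j
    rw [hUv j]
    have e : (starRingEnd ℂ) (u j) - 1 = (starRingEnd ℂ) (u j - 1) := by simp
    rw [e, norm_mul, norm_mul, RCLike.norm_conj]
  -- Cauchy–Schwarz bounds
  have hcs1 : ‖∑ j, ((starRingEnd ℂ) (u j) - 1) * (v j : ℂ) * w j‖
      ≤ Real.sqrt (∑ j, ‖((U - 1) *ᵥ fun k => ((v k : ℝ) : ℂ)) j‖ ^ 2)
        * Real.sqrt (∑ j, ‖w j‖ ^ 2) := by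
    have hb := cs_sum' (fun j => ((starRingEnd ℂ) (u j) - 1) * (v j : ℂ)) w
    have e : (∑ j, ‖((starRingEnd ℂ) (u j) - 1) * (v j : ℂ)‖ ^ 2)
        = ∑ j, ‖((U - 1) *ᵥ fun k => ((v k : ℝ) : ℂ)) j‖ ^ 2 :=
      Finset.sum_congr rfl fun j _ => by rw [hnorm_eq j]
    rwa [e] at hb
  have hcs2 : ‖∑ j, (v j : ℂ) * w j‖ ≤ Real.sqrt (∑ j, ‖w j‖ ^ 2) := by
    have hb := cs_sum' (fun j => ((v j : ℝ) : ℂ)) w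
    have e : (∑ j, ‖((v j : ℝ) : ℂ)‖ ^ 2) = 1 := by
      rw [← hv]
      exact Finset.sum_congr rfl fun j _ => by
        rw [Complex.norm_real, Real.norm_eq_abs, sq_abs]
    rw [e, Real.sqrt_one, one_mul] at hb
    exact hb
  -- wrap up
  have hW0 : 0 ≤ Real.sqrt (∑ j, ‖w j‖ ^ 2) := Real.sqrt_nonneg _
  have hT : ((∑ j, v j * Real.sqrt (‖P j‖) : ℝ) : ℂ)
      = ∑ j, (v j : ℂ) * (Real.sqrt (‖P j‖) : ℂ) := by
    push_cast
    rfl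
  calc ‖d‖ * |∑ j, v j * Real.sqrt (‖P j‖)|
      = ‖d * ((∑ j, v j * Real.sqrt (‖P j‖) : ℝ) : ℂ)‖ := by
        rw [norm_mul, Complex.norm_real, Real.norm_eq_abs]
    _ = ‖(∑ j, ((starRingEnd ℂ) (u j) - 1) * (v j : ℂ) * w j)
          + ((1 : ℂ) - (c : ℂ)) * ∑ j, (v j : ℂ) * w j‖ := by rw [hT, hkeysum]
    _ ≤ ‖∑ j, ((starRingEnd ℂ) (u j) - 1) * (v j : ℂ) * w j‖
          + ‖((1 : ℂ) - (c : ℂ)) * ∑ j, (v j : ℂ) * w j‖ :=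
        norm_add_le _ _
    _ ≤ Real.sqrt (∑ j, ‖((U - 1) *ᵥ fun k => ((v k : ℝ) : ℂ)) j‖ ^ 2)
          * Real.sqrt (∑ j, ‖w j‖ ^ 2)
        + |1 - c| * Real.sqrt (∑ j, ‖w j‖ ^ 2) := by
        refine add_le_add hcs1 ?_
        rw [norm_mul]
        have e : ‖(1 : ℂ) - (c : ℂ)‖ = |1 - c| := by
          rw [show (1 : ℂ) - (c : ℂ) = ((1 - c : ℝ) : ℂ) by push_cast; ring,
            Complex.norm_real, Real.norm_eq_abs]
        rw [e]
        exact mul_le_mul_of_nonneg_left hcs2 (abs_nonneg _)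
    _ = (Real.sqrt (∑ j, ‖((U - 1) *ᵥ fun k => ((v k : ℝ) : ℂ)) j‖ ^ 2) + |1 - c|)
          * Real.sqrt (∑ j, ‖w j‖ ^ 2) := by ring
end

section
/- Evolution identity for the two-body deterministic approximation. Let S be a symmetric N×N complex matrix and define the superoperator 𝒮[X] := diag((Σ_k S_{jk}·X_{kk})_j) on ℂ^{N×N}. Let M₁, M₂ : I → ℂ^{N×N} be differentiable diagonal-matrix-valued functions on an interval I satisfying M_i'(t) = (1/2)·M_i(t) for i = 1, 2 and all t ∈ I, and suppose that for every t ∈ I the linear maps X ↦ X − M₁(t)·M₂(t)·𝒮[X] and X ↦ X − M₂(t)·M₁(t)·𝒮[X] on ℂ^{N×N} are invertible. For fixed B₁, B₂ ∈ ℂ^{N×N} set M_{[1,2]}(t) := (1 − M₁(t)M₂(t)𝒮)^{−1}[M₁(t)·B₁·M₂(t)] and M_{[2,1]}(t) := (1 − M₂(t)M₁(t)𝒮)^{−1}[M₂(t)·B₂·M₁(t)]. Then for every t ∈ I: d/dt ⟨M_{[1,2]}(t)·B₂⟩ = ⟨M_{[1,2]}(t)·𝒮[M_{[2,1]}(t)]⟩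 + ⟨M_{[1,2]}(t)·B₂⟩, where ⟨A⟩ := N^{−1}·Tr A denotes the normalized trace. -/
open Matrix

/-- The diagonal self-energy superoperator `𝒮[X] := diag((Σ_k S_{jk} X_{kk})_j)`. -/
noncomputable def selfEnergyDiag {n : Type*} [Fintype n] [DecidableEq n]
    (S : Matrix n n ℂ) (X : Matrix n n ℂ) : Matrix n n ℂ :=
  Matrix.diagonal (fun j => ∑ k, S j k * X k k)

lemma differentiableAt_det_comp {n : Type*} [Fintype n] [DecidableEq n]
    {f : ℝ → Matrix n n ℂ} {t : ℝ}
    (hf : ∀ i j, DifferentiableAt ℝ (fun s => f s i j) t) :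
    DifferentiableAt ℝ (fun s => (f s).det) t := by
  simp only [Matrix.det_apply']
  exact DifferentiableAt.fun_sum fun σ _ =>
    (DifferentiableAt.fun_finsetProd fun i _ => hf (σ i) i).const_mul _

lemma differentiableAt_adjugate_comp {n : Type*} [Fintype n] [DecidableEq n]
    {f : ℝ → Matrix n n ℂ} {t : ℝ}
    (hf : ∀ i j, DifferentiableAt ℝ (fun s => f s i j) t) (i j : n) :
    DifferentiableAt ℝ (fun s => (f s).adjugate i j) t := by
  simp only [Matrix.adjugate_apply]
  apply differentiableAt_det_comp
  intro a b
  simp only [Matrix.updateRow_apply]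
  by_cases h : a = j
  · simp [h]
  · simp [h, hf a b]

/-- Entrywise description of the defining equation. -/
lemma defining_entry {n : Type*} [Fintype n] [DecidableEq n]
    (S : Matrix n n ℂ) (e₁ e₂ : n → ℂ) (B M : Matrix n n ℂ)
    (h : M - Matrix.diagonal e₁ * Matrix.diagonal e₂ * selfEnergyDiag S M
        = Matrix.diagonal e₁ * B * Matrix.diagonal e₂) (i j : n) :
    M i j - (if i = j then (e₁ i * e₂ i) * ∑ k, S i k * M k k else 0)
      = e₁ i * B i j * e₂ j := by
  have h' := congrArg (fun X : Matrix n n ℂ => X i j) h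
  simpa [selfEnergyDiag, Matrix.sub_apply, Matrix.diagonal_mul_diagonal,
    Matrix.diagonal_apply, Matrix.mul_apply, Finset.sum_ite_eq, Finset.mul_sum,
    mul_assoc, ite_mul, Finset.sum_ite_eq'] using h'

/-- **Evolution identity for the two-body deterministic approximation.**
If the diagonal matrices `Mᵢ(t) = diag(dᵢ(t))` satisfy `Mᵢ' = Mᵢ/2` on an open set
`I`, the superoperators `X ↦ X − M₁M₂𝒮[X]` and `X ↦ X − M₂M₁𝒮[X]` are invertible on
`I`, and `M_{[1,2]}`, `M_{[2,1]}` solve the corresponding defining equations with data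
`B₁, B₂`, then `d/dt ⟨M_{[1,2]}·B₂⟩ = ⟨M_{[1,2]}·𝒮[M_{[2,1]}]⟩ + ⟨M_{[1,2]}·B₂⟩`. -/
theorem deterministic_approximation_evolution
    {n : Type*} [Fintype n] [DecidableEq n]
    (S : Matrix n n ℂ) (hSsymm : S.IsSymm)
    (I : Set ℝ) (hI : IsOpen I)
    (d₁ d₂ : ℝ → n → ℂ)
    (hd₁ : ∀ t ∈ I, ∀ j, HasDerivAt (fun s => d₁ s j) ((1 / 2 : ℂ) * d₁ t j) t)
    (hd₂ : ∀ t ∈ I, ∀ j, HasDerivAt (fun s => d₂ s j) ((1 / 2 : ℂ) * d₂ t j) t)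
    (hinv₁ : ∀ t ∈ I, Function.Bijective (fun X : Matrix n n ℂ =>
      X - Matrix.diagonal (d₁ t) * Matrix.diagonal (d₂ t) * selfEnergyDiag S X))
    (hinv₂ : ∀ t ∈ I, Function.Bijective (fun X : Matrix n n ℂ =>
      X - Matrix.diagonal (d₂ t) * Matrix.diagonal (d₁ t) * selfEnergyDiag S X))
    (B₁ B₂ : Matrix n n ℂ)
    (M₁₂ M₂₁ : ℝ → Matrix n n ℂ)
    (hM₁₂ : ∀ t ∈ I,
      M₁₂ t - Matrix.diagonal (d₁ t) * Matrix.diagonal (d₂ t) * selfEnergyDiag S (M₁₂ t)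
        = Matrix.diagonal (d₁ t) * B₁ * Matrix.diagonal (d₂ t))
    (hM₂₁ : ∀ t ∈ I,
      M₂₁ t - Matrix.diagonal (d₂ t) * Matrix.diagonal (d₁ t) * selfEnergyDiag S (M₂₁ t)
        = Matrix.diagonal (d₂ t) * B₂ * Matrix.diagonal (d₁ t)) :
    ∀ t ∈ I,
      HasDerivAt (fun s => ((Fintype.card n : ℂ))⁻¹ * Matrix.trace (M₁₂ s * B₂))
        (((Fintype.card n : ℂ))⁻¹ * Matrix.trace (M₁₂ t * selfEnergyDiag S (M₂₁ t))
          + ((Fintype.card n : ℂ))⁻¹ * Matrix.trace (M₁₂ t * B₂)) t := by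
  intro t ht
  classical
  set K : ℂ := ((Fintype.card n : ℂ))⁻¹ with hK
  -- the matrix of the linear system on the diagonal
  set A : ℝ → Matrix n n ℂ :=
    fun s => 1 - Matrix.diagonal (fun j => d₁ s j * d₂ s j) * S with hA
  have hAapp : ∀ s i j, A s i j
      = (if i = j then (1 : ℂ) else 0) - d₁ s i * d₂ s i * S i j := by
    intro s i j
    simp [hA, Matrix.sub_apply, Matrix.one_apply, Matrix.diagonal_mul]
  -- entrywise defining equations
  have hE₁ : ∀ s ∈ I, ∀ i j,
      M₁₂ s i j - (if i = j then (d₁ s i * d₂ s i) * ∑ k, S i k * M₁₂ s k k else 0)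
        = d₁ s i * B₁ i j * d₂ s j := fun s hs =>
    defining_entry S (d₁ s) (d₂ s) B₁ (M₁₂ s) (hM₁₂ s hs)
  have hE₂ : ∀ i j,
      M₂₁ t i j - (if i = j then (d₂ t i * d₁ t i) * ∑ k, S i k * M₂₁ t k k else 0)
        = d₂ t i * B₂ i j * d₁ t j :=
    defining_entry S (d₂ t) (d₁ t) B₂ (M₂₁ t) (hM₂₁ t ht)
  -- invertibility of A s for s ∈ I
  have hdet : ∀ s ∈ I, (A s).det ≠ 0 := by
    intro s hs hd0
    obtain ⟨v, hv, hv0⟩ := (Matrix.exists_mulVec_eq_zero_iff).mpr hd0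
    apply hv
    have hAv : ∀ i, (A s *ᵥ v) i = v i - d₁ s i * d₂ s i * ∑ k, S i k * v k := by
      intro i
      simp only [hA, Matrix.sub_mulVec, Matrix.one_mulVec, Pi.sub_apply]
      have h1 : ((Matrix.diagonal (fun j => d₁ s j * d₂ s j) * S) *ᵥ v) i
          = d₁ s i * d₂ s i * ∑ k, S i k * v k := by
        simp [Matrix.mulVec, dotProduct, Matrix.diagonal_mul, Finset.mul_sum, mul_assoc]
      rw [h1]
    have hmv : ∀ i, v i - d₁ s i * d₂ s i * ∑ k, S i k * v k = 0 := by
      intro i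
      have h0 := congrFun hv0 i
      rw [hAv i] at h0
      simpa using h0
    have hT : (fun X : Matrix n n ℂ =>
        X - Matrix.diagonal (d₁ s) * Matrix.diagonal (d₂ s) * selfEnergyDiag S X)
        (Matrix.diagonal v) = (fun X : Matrix n n ℂ =>
        X - Matrix.diagonal (d₁ s) * Matrix.diagonal (d₂ s) * selfEnergyDiag S X) 0 := by
      simp only [selfEnergyDiag]
      ext i j
      rcases eq_or_ne i j with rfl | hij
      · simpa [Matrix.sub_apply, Matrix.diagonal_mul_diagonal, Matrix.diagonal_apply,
          Matrix.mul_apply, Finset.sum_ite_eq, mul_assoc, Finset.mul_sum] using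
          (by simpa [sub_eq_zero, Finset.mul_sum, mul_assoc] using hmv i)
      · simp [Matrix.sub_apply, Matrix.diagonal_mul_diagonal, Matrix.diagonal_apply,
          Matrix.mul_apply, hij]
    have := (hinv₁ s hs).1 hT
    funext i
    have := congrArg (fun X : Matrix n n ℂ => X i i) this
    simpa using this
  have hunit : ∀ s ∈ I, IsUnit (A s).det := fun s hs => isUnit_iff_ne_zero.mpr (hdet s hs)
  -- the diagonal of M₁₂ as an explicit function
  set c : ℝ → n → ℂ := fun s j => d₁ s j * B₁ j j * d₂ s j with hc
  set x : ℝ → n → ℂ := fun s => ((A s).det)⁻¹ • ((A s).adjugate *ᵥ c s) with hx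
  have hxinv : ∀ s ∈ I, x s = (A s)⁻¹ *ᵥ c s := by
    intro s hs
    rw [Matrix.inv_def, Ring.inverse_eq_inv, Matrix.smul_mulVec]
  have hx_eq : ∀ s ∈ I, ∀ i, x s i = M₁₂ s i i := by
    intro s hs
    have hsolve : A s *ᵥ (fun i => M₁₂ s i i) = c s := by
      funext i
      have h := hE₁ s hs i i
      simp only [if_pos rfl] at h
      simp only [hA, Matrix.sub_mulVec, Matrix.one_mulVec]
      have : (Matrix.diagonal (fun j => d₁ s j * d₂ s j) * S) *ᵥ (fun i => M₁₂ s i i)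
          = fun i => d₁ s i * d₂ s i * ∑ k, S i k * M₁₂ s k k := by
        funext i
        simp [Matrix.mulVec, dotProduct, Matrix.diagonal_mul, Finset.mul_sum, mul_assoc]
      rw [this]
      simpa [hc] using h
    have : x s = (A s)⁻¹ *ᵥ (A s *ᵥ (fun i => M₁₂ s i i)) := by
      rw [hxinv s hs, hsolve]
    rw [Matrix.mulVec_mulVec, Matrix.nonsing_inv_mul _ (hunit s hs), Matrix.one_mulVec] at this
    intro i; exact congrFun this i
  -- differentiability of x
  have hd₁' : ∀ j, DifferentiableAt ℝ (fun s => d₁ s j) t := fun j =>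
    (hd₁ t ht j).differentiableAt
  have hd₂' : ∀ j, DifferentiableAt ℝ (fun s => d₂ s j) t := fun j =>
    (hd₂ t ht j).differentiableAt
  have hAdiff : ∀ i j, DifferentiableAt ℝ (fun s => A s i j) t := by
    intro i j
    simp only [hAapp]
    exact (differentiableAt_const _).sub (((hd₁' i).mul (hd₂' i)).mul_const _)
  have hcdiff : ∀ j, DifferentiableAt ℝ (fun s => c s j) t := by
    intro j
    exact ((hd₁' j).mul_const _).mul (hd₂' j)
  have hx_diff : ∀ i, DifferentiableAt ℝ (fun s => x s i) t := by
    intro i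
    have hxi : (fun s => x s i)
        = fun s => ((A s).det)⁻¹ * ∑ j, (A s).adjugate i j * c s j := by
      funext s
      simp [hx, Matrix.mulVec, dotProduct]
    rw [hxi]
    exact ((differentiableAt_det_comp hAdiff).inv (hdet t ht)).mul
      (DifferentiableAt.fun_sum fun j _ =>
        (differentiableAt_adjugate_comp hAdiff i j).mul (hcdiff j))
  set w : n → ℂ := fun i => deriv (fun s => x s i) t with hwdef
  have hw : ∀ i, HasDerivAt (fun s => x s i) (w i) t := fun i => (hx_diff i).hasDerivAt
  -- clean derivative facts
  have hD : ∀ i, HasDerivAt (fun s => d₁ s i * d₂ s i) (d₁ t i * d₂ t i) t := by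
    intro i
    have h := (hd₁ t ht i).mul (hd₂ t ht i)
    refine h.congr_deriv ?_
    ring
  have h2 : ∀ i j, HasDerivAt (fun s => d₁ s i * B₁ i j * d₂ s j)
      (d₁ t i * B₁ i j * d₂ t j) t := by
    intro i j
    have h := ((hd₁ t ht i).mul_const (B₁ i j)).mul (hd₂ t ht j)
    refine h.congr_deriv ?_
    ring
  have hSx : ∀ i, HasDerivAt (fun s => ∑ k, S i k * x s k) (∑ k, S i k * w k) t := by
    intro i
    exact HasDerivAt.fun_sum fun k _ => (hw k).const_mul _
  -- the key relation for w : w - D(Sw) = x t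
  have hxw : ∀ i, w i - d₁ t i * d₂ t i * ∑ k, S i k * w k = x t i := by
    intro i
    have hid : ∀ s ∈ I, x s i - (d₁ s i * d₂ s i) * ∑ k, S i k * x s k
        = d₁ s i * B₁ i i * d₂ s i := by
      intro s hs
      have h := hE₁ s hs i i
      simp only [eq_self_iff_true, if_true] at h
      simp only [hx_eq s hs]
      exact h
    have hL : HasDerivAt (fun s => x s i - (d₁ s i * d₂ s i) * ∑ k, S i k * x s k)
        (w i - (d₁ t i * d₂ t i * ∑ k, S i k * x t k
          + d₁ t i * d₂ t i * ∑ k, S i k * w k)) t := by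
      have := (hw i).sub ((hD i).mul (hSx i))
      refine this.congr_deriv ?_; ring
    have hR : HasDerivAt (fun s => d₁ s i * B₁ i i * d₂ s i) (d₁ t i * B₁ i i * d₂ t i) t :=
      h2 i i
    have hev : (fun s => d₁ s i * B₁ i i * d₂ s i) =ᶠ[nhds t]
        (fun s => x s i - (d₁ s i * d₂ s i) * ∑ k, S i k * x s k) := by
      filter_upwards [hI.mem_nhds ht] with s hs
      exact (hid s hs).symm
    have := (hL.congr_of_eventuallyEq hev).unique hR
    have hxt := hid t ht
    linear_combination this - hxt
  -- notation for the algebraic identity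
  set m : n → ℂ := fun i => M₂₁ t i i with hm
  set y : n → ℂ := fun i => B₂ i i with hy
  set u : n → ℂ := fun i => ∑ k, S i k * w k with hu
  set v : n → ℂ := fun i => ∑ k, S i k * m k with hv
  have hmrel : ∀ i, m i = d₁ t i * d₂ t i * v i + d₁ t i * d₂ t i * y i := by
    intro i
    have h := hE₂ i i
    simp only [eq_self_iff_true, if_true] at h
    simp only [hm, hy, hv]
    linear_combination h
  have hswap : ∑ i, w i * v i = ∑ i, m i * u i := by
    simp only [hv, hu, Finset.mul_sum]
    rw [Finset.sum_comm]
    refine Finset.sum_congr rfl fun k _ => Finset.sum_congr rfl fun i _ => ?_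
    rw [hSsymm.apply i k]
    ring
  have hkey : ∑ i, x t i * v i = ∑ i, d₁ t i * d₂ t i * u i * y i := by
    have e1 : ∑ i, x t i * v i
        = (∑ i, w i * v i) - ∑ i, d₁ t i * d₂ t i * u i * v i := by
      rw [← Finset.sum_sub_distrib]
      refine Finset.sum_congr rfl fun i _ => ?_
      rw [← hxw i]
      simp only [hu]
      ring
    have e2 : ∑ i, m i * u i
        = (∑ i, d₁ t i * d₂ t i * u i * v i) + ∑ i, d₁ t i * d₂ t i * u i * y i := by
      rw [← Finset.sum_add_distrib]
      refine Finset.sum_congr rfl fun i _ => ?_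
      rw [hmrel i]
      ring
    rw [e1, hswap, e2]
    ring
  -- the explicit local formula for the trace
  set P : ℝ → ℂ := fun s => ∑ i, ∑ j, d₁ s i * B₁ i j * d₂ s j * B₂ j i with hP
  set Q : ℝ → ℂ := fun s => ∑ i, (d₁ s i * d₂ s i) * (∑ k, S i k * x s k) * B₂ i i with hQ
  have htrace : ∀ s ∈ I, Matrix.trace (M₁₂ s * B₂) = P s + Q s := by
    intro s hs
    have hterm : ∀ i j, M₁₂ s i j * B₂ j i
        = d₁ s i * B₁ i j * d₂ s j * B₂ j i
          + (if i = j then (d₁ s i * d₂ s i) * (∑ k, S i k * x s k) * B₂ i i else 0) := by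
      intro i j
      have h := hE₁ s hs i j
      rcases eq_or_ne i j with rfl | hij
      · simp only [eq_self_iff_true, if_true] at h ⊢
        simp only [hx_eq s hs]
        linear_combination B₂ i i * h
      · simp only [if_neg hij] at h ⊢
        rw [add_zero]
        linear_combination B₂ j i * h
    calc Matrix.trace (M₁₂ s * B₂) = ∑ i, ∑ j, M₁₂ s i j * B₂ j i := by
          simp [Matrix.trace, Matrix.diag, Matrix.mul_apply]
      _ = ∑ i, ∑ j, (d₁ s i * B₁ i j * d₂ s j * B₂ j i
          + (if i = j then (d₁ s i * d₂ s i) * (∑ k, S i k * x s k) * B₂ i i else 0)) := by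
          refine Finset.sum_congr rfl fun i _ => Finset.sum_congr rfl fun j _ => hterm i j
      _ = P s + Q s := by
          simp [Finset.sum_add_distrib, hP, hQ, Finset.sum_ite_eq]
  -- derivative of the explicit formula
  have hP' : HasDerivAt P (∑ i, ∑ j, d₁ t i * B₁ i j * d₂ t j * B₂ j i) t := by
    refine HasDerivAt.fun_sum fun i _ => HasDerivAt.fun_sum fun j _ => ?_
    exact (h2 i j).mul_const _
  have hQ' : HasDerivAt Q (∑ i, (d₁ t i * d₂ t i * (∑ k, S i k * x t k)
      + d₁ t i * d₂ t i * (∑ k, S i k * w k)) * B₂ i i) t := by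
    refine HasDerivAt.fun_sum fun i _ => ?_
    exact ((hD i).mul (hSx i)).mul_const _
  have hG : HasDerivAt (fun s => K * (P s + Q s))
      (K * ((∑ i, ∑ j, d₁ t i * B₁ i j * d₂ t j * B₂ j i)
        + ∑ i, (d₁ t i * d₂ t i * (∑ k, S i k * x t k)
          + d₁ t i * d₂ t i * (∑ k, S i k * w k)) * B₂ i i)) t :=
    (hP'.add hQ').const_mul K
  -- transfer to the original function
  have hev : (fun s => K * Matrix.trace (M₁₂ s * B₂)) =ᶠ[nhds t]
      (fun s => K * (P s + Q s)) := by
    filter_upwards [hI.mem_nhds ht] with s hs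
    rw [htrace s hs]
  have hmain := hG.congr_of_eventuallyEq hev
  refine hmain.congr_deriv ?_
  -- identify the derivative value
  have htr1 : Matrix.trace (M₁₂ t * selfEnergyDiag S (M₂₁ t)) = ∑ i, x t i * v i := by
    simp only [selfEnergyDiag, Matrix.trace, Matrix.diag, Matrix.mul_apply,
      Matrix.diagonal_apply, mul_ite, mul_zero, Finset.sum_ite_eq, Finset.sum_ite_eq',
      Finset.mem_univ, if_true]
    refine Finset.sum_congr rfl fun i _ => ?_
    rw [← hx_eq t ht i]
    try simp [hv, hm]
  have htr2 : Matrix.trace (M₁₂ t * B₂) = P t + Q t := htrace t ht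
  have hsplit : (∑ i, (d₁ t i * d₂ t i * ∑ k, S i k * x t k
        + d₁ t i * d₂ t i * ∑ k, S i k * w k) * B₂ i i)
      = (∑ i, (d₁ t i * d₂ t i * ∑ k, S i k * x t k) * B₂ i i)
        + ∑ i, d₁ t i * d₂ t i * (∑ k, S i k * w k) * B₂ i i := by
    rw [← Finset.sum_add_distrib]
    exact Finset.sum_congr rfl fun i _ => by ring
  rw [htr1, htr2, hkey]
  simp only [hP, hQ, hu, hy]
  rw [hsplit]
  ring
end
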